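/- Let kp, γp > 0 and let μ*, σ*² > 0 with σ*² ≠ μ*. Define u2* = −γp + kp·μ*/(σ*² − μ*) and u1* = (γp/kp)·μ*·u2*. Then u1* > 0 and u2* > 0 if and only if μ* < σ*² < (1 + kp/γp)·μ*. Hence the set of admissible mean–variance reference pairs is the open nonempty set A = { (x, y) ∈ ℝ²_{>0} : x < y < (1 + kp/γp)·x }. -/

import Mathlib

/-!
Since `u₁* = (γp / kp) μ* u₂*` with a positive factor, admissibility reduces to `u₂* > 0`, i.e.
`kp μ* / (σ*² - μ*) > γp`. A quotient of a positive number exceeds a positive constant only when its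
denominator is positive, and clearing it gives `0 < σ*² - μ* < (kp / γp) μ*`. The admissible set is
cut out by finitely many strict inequalities between continuous functions, hence open, and
`(1, 1 + kp / (2 γp))` lies in it.
-/

lemma lt_div_iff_pos_and_mul_lt {γ a d : ℝ} (hγ : 0 < γ) (ha : 0 ≤ a) :
    γ < a / d ↔ 0 < d ∧ γ * d < a := by
  rcases lt_or_ge 0 d with hd | hd
  · simp [hd, lt_div_iff₀ hd]
  · have : a / d ≤ 0 := div_nonpos_of_nonneg_of_nonpos ha hd
    constructor
    · intro h; linarith
    · rintro ⟨hd', -⟩; linarith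

lemma equilibrium_degradation_pos_iff {kp γp μ σ2 : ℝ} (hkp : 0 < kp) (hγp : 0 < γp)
    (hμ : 0 < μ) :
    0 < -γp + kp * μ / (σ2 - μ) ↔ μ < σ2 ∧ σ2 < (1 + kp / γp) * μ := by
  have clear_denom : γp * (σ2 - μ) < kp * μ ↔ σ2 < (1 + kp / γp) * μ := by
    rw [← lt_div_iff₀' hγp, add_mul, one_mul, ← sub_lt_iff_lt_add', div_mul_eq_mul_div]
  rw [lt_neg_add_iff_lt, lt_div_iff_pos_and_mul_lt hγp (by positivity), sub_pos, clear_denom]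

def admissibleSet (s : ℝ) : Set (ℝ × ℝ) :=
  {p | 0 < p.1 ∧ 0 < p.2 ∧ p.1 < p.2 ∧ p.2 < s * p.1}

lemma isOpen_admissibleSet (s : ℝ) : IsOpen (admissibleSet s) :=
  (isOpen_lt continuous_const continuous_fst).and <|
    (isOpen_lt continuous_const continuous_snd).and <|
      (isOpen_lt continuous_fst continuous_snd).and <|
        isOpen_lt continuous_snd (continuous_const.mul continuous_fst)

lemma admissibleSet_nonempty {s : ℝ} (hs : 1 < s) : (admissibleSet s).Nonempty :=
  ⟨(1, (1 + s) / 2), one_pos, by linarith, by linarith, by linarith⟩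

theorem stmt10 (kp γp μ σ2 : ℝ) (hkp : 0 < kp) (hγp : 0 < γp)
    (hμ : 0 < μ) :
    -- positivity of the equilibrium inputs characterizes admissibility
    ((0 < (γp / kp) * μ * (-γp + kp * μ / (σ2 - μ)) ∧
        0 < -γp + kp * μ / (σ2 - μ)) ↔
      (μ < σ2 ∧ σ2 < (1 + kp / γp) * μ)) ∧
    -- the admissible set is open and nonempty
    IsOpen {p : ℝ × ℝ | 0 < p.1 ∧ 0 < p.2 ∧ p.1 < p.2 ∧ p.2 < (1 + kp / γp) * p.1} ∧
    {p : ℝ × ℝ | 0 < p.1 ∧ 0 < p.2 ∧ p.1 < p.2 ∧ p.2 < (1 + kp / γp) * p.1}.Nonempty := by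
  have hgain : 0 < (γp / kp) * μ := by positivity
  refine ⟨?_, isOpen_admissibleSet _, admissibleSet_nonempty ?_⟩
  · rw [and_iff_right_of_imp (mul_pos hgain)]
    exact equilibrium_degradation_pos_iff hkp hγp hμ
  · linarith [div_pos hkp hγp]
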